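/- Let $A, B \in M_5(\mathbb{C})$ satisfy $\operatorname{rank}(A:B) = 5$ and $A C_5 A^* = B C_5 B^*$, where $(A:B)$ denotes the $5\times 10$ matrix formed by concatenating $A$ and $B$, and $C_5 = ((-1)^r\delta_{r,6-s})_{r,s=1}^5$. Then $3 \le \operatorname{rank} A \le 5$ and $3 \le \operatorname{rank} B \le 5$. -/

import Mathlib

open Matrix

/-- The `5 × 5` symplectic matrix with 1-based entries `(-1)^r δ_{r, 6-s}`. -/
noncomputable def C5 : Matrix (Fin 5) (Fin 5) ℂ :=
  Matrix.of fun r s => if r.val + s.val = 4 then ((-1 : ℂ)) ^ (r.val + 1) else 0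

/-!
The Hermitian form `u ↦ u C₅ u*` is negative definite on the 3-dimensional subspace
`u₅ = u₁, u₄ = -u₂` (1-based indices), where it equals `-(2|u₁|² + 2|u₂|² + |u₃|²)`.
If `x A = 0` then `(x B) C₅ (x B)* = x A C₅ A* x* = 0`, so `x ↦ x B` maps the left kernel of `A`
onto a subspace meeting the negative definite one only in `0`. As `rank (A : B) = 5`, this map is
injective on the left kernel of `A`, whose dimension is therefore at most `5 - 3 = 2`.
-/

open Module LinearMap ComplexConjugate

namespace Matrix

variable {K m n p : Type*} [Field K] [Fintype m] [Fintype n]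

theorem rank_add_finrank_ker_vecMulLinear (A : Matrix m n K) :
    A.rank + finrank K (ker A.vecMulLinear) = Fintype.card m := by
  rw [← rank_transpose, rank, mulVecLin_transpose, finrank_range_add_finrank_ker,
    finrank_fintype_fun_eq_card]

theorem vecMul_dotProduct_mulVec_star {R : Type*} [CommRing R] [StarRing R]
    (x : m → R) (B : Matrix m n R) (C : Matrix n n R) :
    (x ᵥ* B) ⬝ᵥ C *ᵥ star (x ᵥ* B) = x ⬝ᵥ (B * C * Bᴴ) *ᵥ star x := by
  simp only [star_vecMul, dotProduct_mulVec, vecMul_vecMul, Matrix.mul_assoc]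

variable [Fintype p]

theorem disjoint_ker_vecMulLinear_of_rank_fromCols (A : Matrix m n K) (B : Matrix m p K)
    (h : (fromCols A B).rank = Fintype.card m) :
    Disjoint (ker A.vecMulLinear) (ker B.vecMulLinear) := by
  have hker : ker (fromCols A B).vecMulLinear = ⊥ := by
    have := rank_add_finrank_ker_vecMulLinear (fromCols A B)
    exact Submodule.finrank_eq_zero.mp (by omega)
  rw [Submodule.disjoint_def]
  intro x hA hB
  rw [mem_ker, vecMulLinear_apply] at hA hB
  rw [← Submodule.mem_bot K, ← hker, mem_ker, vecMulLinear_apply, vecMul_fromCols, hA, hB]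
  ext (_ | _) <;> rfl

theorem card_add_finrank_le_rank_add_card (A : Matrix m n K) (B : Matrix m p K)
    (hAB : Disjoint (ker A.vecMulLinear) (ker B.vecMulLinear)) (N : Submodule K (p → K))
    (hN : ∀ x, x ᵥ* A = 0 → x ᵥ* B ∈ N → x ᵥ* B = 0) :
    Fintype.card m + finrank K N ≤ A.rank + Fintype.card p := by
  have hW : finrank K ((ker A.vecMulLinear).map B.vecMulLinear) =
      finrank K (ker A.vecMulLinear) := by
    rw [← range_domRestrict]
    refine finrank_range_of_inj ?_
    rw [← LinearMap.ker_eq_bot, ker_domRestrict]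
    exact Submodule.disjoint_iff_comap_eq_bot.mp hAB
  have hWN : Disjoint ((ker A.vecMulLinear).map B.vecMulLinear) N := by
    rw [Submodule.disjoint_def]
    rintro _ ⟨x, hx, rfl⟩ hxN
    exact hN x hx hxN
  have := Submodule.finrank_add_finrank_le_of_disjoint hWN
  have := rank_add_finrank_ker_vecMulLinear A
  simp only [finrank_fintype_fun_eq_card] at *
  omega

end Matrix

noncomputable def negSubspaceC5 : Submodule ℂ (Fin 5 → ℂ) :=
  let x (i : Fin 5) : (Fin 5 → ℂ) →ₗ[ℂ] ℂ := proj i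
  ker ((x 4 - x 0).prod (x 3 + x 1))

theorem mem_negSubspaceC5 {u : Fin 5 → ℂ} : u ∈ negSubspaceC5 ↔ u 4 = u 0 ∧ u 3 = -u 1 := by
  simp [negSubspaceC5, sub_eq_zero, eq_neg_iff_add_eq_zero]

theorem three_le_finrank_negSubspaceC5 : 3 ≤ finrank ℂ negSubspaceC5 := by
  obtain ⟨f, hf⟩ : ∃ f : (Fin 5 → ℂ) →ₗ[ℂ] ℂ × ℂ, negSubspaceC5 = ker f := ⟨_, rfl⟩
  rw [hf]
  have := finrank_range_add_finrank_ker f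
  have := Submodule.finrank_le (range f)
  simp only [finrank_fintype_fun_eq_card, Fintype.card_fin, finrank_prod, finrank_self] at *
  omega

theorem dotProduct_C5_mulVec_star (u : Fin 5 → ℂ) :
    u ⬝ᵥ C5 *ᵥ star u = -(u 0 * conj (u 4)) + u 1 * conj (u 3) - u 2 * conj (u 2)
      + u 3 * conj (u 1) - u 4 * conj (u 0) := by
  simp only [dotProduct, mulVec, C5, of_apply, Fin.sum_univ_five, Pi.star_apply, RCLike.star_def]
  norm_num
  ring

theorem dotProduct_C5_mulVec_star_of_mem {u : Fin 5 → ℂ} (hu : u ∈ negSubspaceC5) :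
    u ⬝ᵥ C5 *ᵥ star u =
      -((2 * Complex.normSq (u 0) + 2 * Complex.normSq (u 1) + Complex.normSq (u 2) : ℝ) : ℂ) := by
  obtain ⟨h4, h3⟩ := mem_negSubspaceC5.mp hu
  rw [dotProduct_C5_mulVec_star, h4, h3, map_neg]
  push_cast
  simp only [← Complex.mul_conj]
  ring

theorem eq_zero_of_mem_negSubspaceC5 {u : Fin 5 → ℂ} (hu : u ∈ negSubspaceC5)
    (h : u ⬝ᵥ C5 *ᵥ star u = 0) : u = 0 := by
  rw [dotProduct_C5_mulVec_star_of_mem hu, neg_eq_zero, Complex.ofReal_eq_zero] at h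
  obtain ⟨h0, h1, h2⟩ : u 0 = 0 ∧ u 1 = 0 ∧ u 2 = 0 := by
    simp only [← Complex.normSq_eq_zero]
    refine ⟨?_, ?_, ?_⟩ <;>
      linarith [Complex.normSq_nonneg (u 0), Complex.normSq_nonneg (u 1),
        Complex.normSq_nonneg (u 2)]
  obtain ⟨h4, h3⟩ := mem_negSubspaceC5.mp hu
  ext i
  fin_cases i <;> simp [h0, h1, h2, h3, h4]

theorem three_le_rank_of_mul_C5_mul_conjTranspose_eq (A B : Matrix (Fin 5) (Fin 5) ℂ)
    (hAB : Disjoint (ker A.vecMulLinear) (ker B.vecMulLinear))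
    (hsa : A * C5 * Aᴴ = B * C5 * Bᴴ) : 3 ≤ A.rank := by
  have := card_add_finrank_le_rank_add_card A B hAB negSubspaceC5 fun x hxA hxN ↦
    eq_zero_of_mem_negSubspaceC5 hxN <| by
      rw [vecMul_dotProduct_mulVec_star, ← hsa, ← vecMul_dotProduct_mulVec_star, hxA]
      simp
  have := three_le_finrank_negSubspaceC5
  simp only [Fintype.card_fin] at *
  omega

theorem stmt_2 (A B : Matrix (Fin 5) (Fin 5) ℂ)
    (hrank : (Matrix.fromCols A B).rank = 5)
    (hsa : A * C5 * Aᴴ = B * C5 * Bᴴ) :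
    (3 ≤ A.rank ∧ A.rank ≤ 5) ∧ (3 ≤ B.rank ∧ B.rank ≤ 5) := by
  have hAB := disjoint_ker_vecMulLinear_of_rank_fromCols A B (by simpa using hrank)
  exact ⟨⟨three_le_rank_of_mul_C5_mul_conjTranspose_eq A B hAB hsa,
      A.rank_le_card_height.trans_eq (Fintype.card_fin 5)⟩,
    ⟨three_le_rank_of_mul_C5_mul_conjTranspose_eq B A hAB.symm hsa.symm,
      B.rank_le_card_height.trans_eq (Fintype.card_fin 5)⟩⟩
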